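/- arXiv:2408.15435 — 2 statements merged into one kernel-verified Lean document; each statement's English description precedes it below -/
import Mathlib

section
/- Let N, M, K be positive natural numbers and let B ∈ ℂ^{N×M} be a binary selection matrix. Then for X ∈ ℂ^{N×K} and W ∈ ℂ^{M×K}, the equality X = B·W holds if and only if there exist matrices U ∈ ℂ^{N×N} and V ∈ ℂ^{K×K} such that the block matrix [[U, X, B], [Xᴴ, V, Wᴴ], [Bᴴ, W, I_M]] is positive semidefinite and Re(Tr(U)) − M ≤ 0. -/
/-!
With `P = [B; Wᴴ]` the block matrix is `[[A, P], [Pᴴ, I]]`, whose Schur complement with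
respect to `I` is `[[U - BBᴴ, X - BW], [(X - BW)ᴴ, V - WᴴW]]`. Taking `U = BBᴴ`, `V = WᴴW`
makes it zero. Conversely, `Tr (BBᴴ) = M` for a selection matrix, so the trace condition forces the positive
semidefinite block `U - BBᴴ` to vanish, and a positive semidefinite matrix with a zero diagonal
block has zero off-diagonal blocks, i.e. `X = BW`.
-/

open Matrix
open scoped ComplexOrder

namespace Matrix

variable {ι κ 𝕜 : Type*} [Fintype ι] [RCLike 𝕜]

lemma PosSemidef.apply_eq_zero_of_diag_eq_zero {A : Matrix ι ι 𝕜} (hA : A.PosSemidef) {i : ι}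
    (hi : A i i = 0) (j : ι) : A j i = 0 := by
  classical
  have hquad : star (Pi.single i 1) ⬝ᵥ A *ᵥ Pi.single i (1 : 𝕜) = 0 := by
    simp [hi]
  simpa using congrFun ((hA.dotProduct_mulVec_zero_iff _).mp hquad) j

lemma PosSemidef.eq_zero_of_re_trace_nonpos {A : Matrix ι ι 𝕜} (hA : A.PosSemidef)
    (h : RCLike.re A.trace ≤ 0) : A = 0 := by
  obtain ⟨hre, him⟩ := RCLike.nonneg_iff.mp hA.trace_nonneg
  exact hA.trace_eq_zero_iff.mp <|
    RCLike.ext (by simpa using le_antisymm h hre) (by simpa using him)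

lemma PosSemidef.eq_zero_of_fromBlocks_zero [Fintype κ] {C : Matrix ι κ 𝕜} {D : Matrix κ κ 𝕜}
    (h : (fromBlocks 0 C Cᴴ D).PosSemidef) : C = 0 := by
  ext i j
  simpa using congrArg star (h.apply_eq_zero_of_diag_eq_zero (i := Sum.inl i) rfl (Sum.inr j))

lemma posSemidef_fromBlocks_one_iff [DecidableEq κ] [Fintype κ] {A : Matrix ι ι 𝕜}
    {C : Matrix ι κ 𝕜} :
    (fromBlocks A C Cᴴ 1).PosSemidef ↔ (A - C * Cᴴ).PosSemidef := by
  let : Invertible (1 : Matrix κ κ 𝕜) := invertibleOne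
  rw [PosDef.fromBlocks₂₂ _ _ PosDef.one, inv_one, Matrix.mul_one]

lemma trace_mul_conjTranspose_eq_card_of_selection {R : Type*} [Semiring R] [StarRing R]
    [Fintype κ] {B : Matrix ι κ R} (hbin : ∀ i j, B i j = 0 ∨ B i j = 1) (hcol : ∀ j, ∃! i, B i j = 1) :
    (B * Bᴴ).trace = Fintype.card κ := by
  classical
  have hsq : ∀ i j, B i j * star (B i j) = B i j := by
    intro i j
    rcases hbin i j with h | h <;> simp [h]
  have hcolsum : ∀ j, ∑ i, B i j = 1 := by
    intro j
    obtain ⟨i, hi, huniq⟩ := hcol j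
    rw [Finset.sum_eq_single_of_mem i (Finset.mem_univ i)
      fun i' _ hi' => (hbin i' j).resolve_right (hi' ∘ huniq i'), hi]
  calc (B * Bᴴ).trace = ∑ i, ∑ j, B i j := by simp [trace, mul_apply, hsq]
    _ = ∑ j, ∑ i, B i j := Finset.sum_comm
    _ = Fintype.card κ := by simp [hcolsum]

end Matrix

theorem stmt_4_general (N M K : ℕ)
    (B : Matrix (Fin N) (Fin M) ℂ)
    (hbin : ∀ n m, B n m = 0 ∨ B n m = 1)
    (hcol : ∀ m, ∃! n, B n m = 1)
    (X : Matrix (Fin N) (Fin K) ℂ) (W : Matrix (Fin M) (Fin K) ℂ) :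
    X = B * W ↔
      ∃ (U : Matrix (Fin N) (Fin N) ℂ) (V : Matrix (Fin K) (Fin K) ℂ),
        (Matrix.fromBlocks
            (Matrix.fromBlocks U X Xᴴ V)
            (Matrix.fromRows B Wᴴ)
            (Matrix.fromCols Bᴴ W)
            (1 : Matrix (Fin M) (Fin M) ℂ)).PosSemidef ∧
        (Matrix.trace U).re - (M : ℝ) ≤ 0 := by
  have htrace := trace_mul_conjTranspose_eq_card_of_selection hbin hcol
  have hcols : fromCols Bᴴ W = (fromRows B Wᴴ)ᴴ := by
    rw [conjTranspose_fromRows_eq_fromCols_conjTranspose, conjTranspose_conjTranspose]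
  have hschur (U V) : fromBlocks U X Xᴴ V - fromRows B Wᴴ * (fromRows B Wᴴ)ᴴ =
      fromBlocks (U - B * Bᴴ) (X - B * W) (X - B * W)ᴴ (V - Wᴴ * W) := by
    rw [← hcols, fromRows_mul_fromCols, conjTranspose_sub, conjTranspose_mul]
    ext (_ | _) (_ | _) <;> simp
  simp only [hcols, posSemidef_fromBlocks_one_iff, hschur]
  constructor
  · rintro rfl
    exact ⟨B * Bᴴ, Wᴴ * W, by simpa using PosSemidef.zero, by simp [htrace]⟩
  · rintro ⟨U, V, hS, htr⟩
    have hU : U - B * Bᴴ = 0 := by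
      refine PosSemidef.eq_zero_of_re_trace_nonpos (hS.submatrix Sum.inl) ?_
      simpa [trace_sub, htrace] using htr
    rw [hU] at hS
    exact sub_eq_zero.mp hS.eq_zero_of_fromBlocks_zero

/-- Lemma 1 of the paper: for a binary selection matrix `B` (every entry in `{0,1}`,
each column with exactly one entry equal to `1`), the bilinear equality `X = B·W` is
equivalent to the LMI `[[U, X, B], [Xᴴ, V, Wᴴ], [Bᴴ, W, I_M]] ⪰ 0` together with
`Re (Tr U) − M ≤ 0` for some `U`, `V`. -/
theorem stmt_4 (N M K : ℕ) (hN : 0 < N) (hM : 0 < M) (hK : 0 < K)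
    (B : Matrix (Fin N) (Fin M) ℂ)
    (hbin : ∀ n m, B n m = 0 ∨ B n m = 1)
    (hcol : ∀ m, ∃! n, B n m = 1)
    (X : Matrix (Fin N) (Fin K) ℂ) (W : Matrix (Fin M) (Fin K) ℂ) :
    X = B * W ↔
      ∃ (U : Matrix (Fin N) (Fin N) ℂ) (V : Matrix (Fin K) (Fin K) ℂ),
        (Matrix.fromBlocks
            (Matrix.fromBlocks U X Xᴴ V)
            (Matrix.fromRows B Wᴴ)
            (Matrix.fromCols Bᴴ W)
            (1 : Matrix (Fin M) (Fin M) ℂ)).PosSemidef ∧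
        (Matrix.trace U).re - (M : ℝ) ≤ 0 :=
  stmt_4_general N M K B hbin hcol X W
end

section
/- Let N, M be positive natural numbers and let B ∈ ℂ^{N×M} be a binary selection matrix. Then for X̂ ∈ ℂ^{N×N} and W ∈ ℂ^{M×M}, the equality X̂ = B·W·Bᴴ holds if and only if there exist matrices Ŝ ∈ ℂ^{N×N}, T̂ ∈ ℂ^{N×N}, Y ∈ ℂ^{N×M}, U ∈ ℂ^{N×N}, and V ∈ ℂ^{M×M} such that all four of the following hold: (C7a) the block matrix [[Ŝ, X̂, B], [X̂ᴴ, T̂, Y], [Bᴴ, Yᴴ, I_M]] is positive semidefinite; (C7b) Re(Tr(Ŝ)) − M ≤ 0; (C7c) the block matrix [[U, Y, B], [Yᴴ, V, W], [Bᴴ, Wᴴ, I_M]] is positive semidefinite; (C7d) Re(Tr(U)) − M ≤ 0. -/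
open Matrix
open scoped ComplexOrder

/-!
By the Schur complement with respect to the identity block, the block matrix
`[[S, X, A], [Xᴴ, T, Z], [Aᴴ, Zᴴ, I]]` is positive semidefinite iff
`[[S - AAᴴ, X - AZᴴ], [Xᴴ - ZAᴴ, T - ZZᴴ]]` is. If moreover `Re tr S ≤ Re tr (AAᴴ)`, the positive
semidefinite block `S - AAᴴ` has nonpositive trace, hence vanishes, and then so does the
off-diagonal block: `X = AZᴴ`. Conversely `S = AAᴴ`, `T = ZZᴴ` work. For a binary selection matrix
`tr (BBᴴ) = M`, and `X̂ = BWBᴴ` is the conjunction of `X̂ = BYᴴ` and `Y = BWᴴ`, each of which is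
such a factorization constraint.
-/

namespace Matrix

lemma fromBlocks_sub_fromBlocks {α l m n o : Type*} [Sub α]
    (A A' : Matrix n l α) (B B' : Matrix n m α) (C C' : Matrix o l α) (D D' : Matrix o m α) :
    fromBlocks A B C D - fromBlocks A' B' C' D' =
      fromBlocks (A - A') (B - B') (C - C') (D - D') := by
  ext (i | i) (j | j) <;> rfl

def IsBinarySelection {R m n : Type*} [Zero R] [One R] (B : Matrix m n R) : Prop :=
  (∀ i j, B i j = 0 ∨ B i j = 1) ∧ ∀ j, ∃! i, B i j = 1

lemma IsBinarySelection.trace_mul_conjTranspose_self {R m n : Type*} [Semiring R] [StarRing R]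
    [Fintype m] [Fintype n] {B : Matrix m n R} (hB : B.IsBinarySelection) :
    (B * Bᴴ).trace = Fintype.card n := by
  have hcol_sum : ∀ j, ∑ i, B i j * star (B i j) = 1 := by
    intro j
    obtain ⟨i₀, hi₀, huniq⟩ := hB.2 j
    rw [Finset.sum_eq_single i₀ (fun i _ hi => ?_) (by simp)]
    · simp [hi₀]
    · rcases hB.1 i j with h | h
      · simp [h]
      · exact absurd (huniq i h) hi
  simp only [trace, diag, mul_apply, conjTranspose_apply]
  rw [Finset.sum_comm, Finset.sum_congr rfl fun j _ => hcol_sum j]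
  simp

section RCLike

variable {𝕜 : Type*} [RCLike 𝕜] {m n p : Type*} [Fintype m] [Fintype n] [Fintype p]

lemma PosSemidef.apply_eq_zero_of_diag_eq_zero_s11 {H : Matrix n n 𝕜} (hH : H.PosSemidef) {i : n}
    (hi : H i i = 0) (j : n) : H i j = 0 := by
  classical
  have hcol : H *ᵥ Pi.single i 1 = 0 :=
    (hH.dotProduct_mulVec_zero_iff _).mp (by simp [mulVec_single, hi])
  rw [mulVec_single_one] at hcol
  rw [← hH.isHermitian.apply i j, ← col_apply H i j, hcol, Pi.zero_apply, star_zero]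

lemma PosSemidef.eq_zero_of_re_trace_nonpos_s11 {H : Matrix n n 𝕜} (hH : H.PosSemidef)
    (htr : RCLike.re H.trace ≤ 0) : H = 0 := by
  obtain ⟨hre, him⟩ := RCLike.nonneg_iff.mp hH.trace_nonneg
  exact hH.trace_eq_zero_iff.mp <|
    RCLike.ext (by simpa using le_antisymm htr hre) (by simpa using him)

lemma PosSemidef.fromBlocks₁₂_eq_zero {A : Matrix m m 𝕜} {B : Matrix m n 𝕜} {C : Matrix n m 𝕜}
    {D : Matrix n n 𝕜} (h : (fromBlocks A B C D).PosSemidef) (hA : A = 0) : B = 0 := by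
  ext i j
  simpa using h.apply_eq_zero_of_diag_eq_zero_s11 (i := Sum.inl i) (by simp [hA]) (Sum.inr j)

lemma posSemidef_fromBlocks_one_iff_s11 [DecidableEq p] (P : Matrix m m 𝕜) (Q : Matrix m p 𝕜) :
    (fromBlocks P Q Qᴴ 1).PosSemidef ↔ (P - Q * Qᴴ).PosSemidef := by
  let : Invertible (1 : Matrix p p 𝕜) := invertibleOne
  rw [PosDef.fromBlocks₂₂ P Q PosDef.one, inv_one, Matrix.mul_one]

lemma eq_mul_conjTranspose_iff_exists_posSemidef [DecidableEq p] (A : Matrix m p 𝕜)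
    (Z : Matrix n p 𝕜) (X : Matrix m n 𝕜) :
    X = A * Zᴴ ↔ ∃ (S : Matrix m m 𝕜) (T : Matrix n n 𝕜),
      (fromBlocks (fromBlocks S X Xᴴ T) (fromRows A Z) (fromCols Aᴴ Zᴴ) 1).PosSemidef ∧
      RCLike.re S.trace ≤ RCLike.re (A * Aᴴ).trace := by
  have hschur : ∀ S T,
      (fromBlocks (fromBlocks S X Xᴴ T) (fromRows A Z) (fromCols Aᴴ Zᴴ) 1).PosSemidef ↔
        (fromBlocks (S - A * Aᴴ) (X - A * Zᴴ) (Xᴴ - Z * Aᴴ) (T - Z * Zᴴ)).PosSemidef := by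
    intro S T
    rw [← conjTranspose_fromRows_eq_fromCols_conjTranspose, posSemidef_fromBlocks_one_iff_s11,
      conjTranspose_fromRows_eq_fromCols_conjTranspose, fromRows_mul_fromCols,
      fromBlocks_sub_fromBlocks]
  simp_rw [hschur]
  constructor
  · rintro rfl
    refine ⟨A * Aᴴ, Z * Zᴴ, ?_, le_rfl⟩
    simpa [conjTranspose_mul] using PosSemidef.zero
  · rintro ⟨S, T, hpsd, htr⟩
    have hS : S - A * Aᴴ = 0 := by
      have h₁₁ : (S - A * Aᴴ).PosSemidef := hpsd.submatrix Sum.inl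
      exact h₁₁.eq_zero_of_re_trace_nonpos_s11 (by simpa [trace_sub] using htr)
    exact sub_eq_zero.mp (hpsd.fromBlocks₁₂_eq_zero hS)

end RCLike

end Matrix

theorem stmt_11_general (N M : ℕ)
    (B : Matrix (Fin N) (Fin M) ℂ)
    (hbin : ∀ n m, B n m = 0 ∨ B n m = 1)
    (hcol : ∀ m, ∃! n, B n m = 1)
    (Xh : Matrix (Fin N) (Fin N) ℂ) (W : Matrix (Fin M) (Fin M) ℂ) :
    Xh = B * W * Bᴴ ↔
      ∃ (S : Matrix (Fin N) (Fin N) ℂ) (T : Matrix (Fin N) (Fin N) ℂ)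
        (Y : Matrix (Fin N) (Fin M) ℂ) (U : Matrix (Fin N) (Fin N) ℂ)
        (V : Matrix (Fin M) (Fin M) ℂ),
        (Matrix.fromBlocks
            (Matrix.fromBlocks S Xh Xhᴴ T)
            (Matrix.fromRows B Y)
            (Matrix.fromCols Bᴴ Yᴴ)
            (1 : Matrix (Fin M) (Fin M) ℂ)).PosSemidef ∧
        (Matrix.trace S).re - (M : ℝ) ≤ 0 ∧
        (Matrix.fromBlocks
            (Matrix.fromBlocks U Y Yᴴ V)
            (Matrix.fromRows B W)
            (Matrix.fromCols Bᴴ Wᴴ)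
            (1 : Matrix (Fin M) (Fin M) ℂ)).PosSemidef ∧
        (Matrix.trace U).re - (M : ℝ) ≤ 0 := by
  have hY : Xh = B * W * Bᴴ ↔ ∃ Y, Xh = B * Yᴴ ∧ Y = B * Wᴴ := by
    constructor
    · rintro rfl
      exact ⟨B * Wᴴ, by simp [conjTranspose_mul, Matrix.mul_assoc], rfl⟩
    · rintro ⟨Y, rfl, rfl⟩
      simp [conjTranspose_mul, Matrix.mul_assoc]
  have htr : ((B * Bᴴ).trace).re = M := by
    simp [IsBinarySelection.trace_mul_conjTranspose_self ⟨hbin, hcol⟩]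
  simp only [hY, eq_mul_conjTranspose_iff_exists_posSemidef, RCLike.re_to_complex, htr,
    sub_nonpos]
  constructor
  · rintro ⟨Y, ⟨S, T, hST⟩, ⟨U, V, hUV⟩⟩
    exact ⟨S, T, Y, U, V, hST.1, hST.2, hUV⟩
  · rintro ⟨S, T, Y, U, V, hS, hSt, hUV⟩
    exact ⟨Y, ⟨S, T, hS, hSt⟩, ⟨U, V, hUV⟩⟩

/-- Lemma 5 of the paper: for a binary selection matrix `B` (every entry in `{0,1}`,
each column with exactly one entry equal to `1`), the trilinear equality
`X̂ = B·W·Bᴴ` holds iff there exist `Ŝ, T̂, Y, U, V` with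
(C7a) `[[Ŝ, X̂, B], [X̂ᴴ, T̂, Y], [Bᴴ, Yᴴ, I_M]] ⪰ 0`, (C7b) `Re(Tr Ŝ) − M ≤ 0`,
(C7c) `[[U, Y, B], [Yᴴ, V, W], [Bᴴ, Wᴴ, I_M]] ⪰ 0`, (C7d) `Re(Tr U) − M ≤ 0`. -/
theorem stmt_11 (N M : ℕ) (hN : 0 < N) (hM : 0 < M)
    (B : Matrix (Fin N) (Fin M) ℂ)
    (hbin : ∀ n m, B n m = 0 ∨ B n m = 1)
    (hcol : ∀ m, ∃! n, B n m = 1)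
    (Xh : Matrix (Fin N) (Fin N) ℂ) (W : Matrix (Fin M) (Fin M) ℂ) :
    Xh = B * W * Bᴴ ↔
      ∃ (S : Matrix (Fin N) (Fin N) ℂ) (T : Matrix (Fin N) (Fin N) ℂ)
        (Y : Matrix (Fin N) (Fin M) ℂ) (U : Matrix (Fin N) (Fin N) ℂ)
        (V : Matrix (Fin M) (Fin M) ℂ),
        (Matrix.fromBlocks
            (Matrix.fromBlocks S Xh Xhᴴ T)
            (Matrix.fromRows B Y)
            (Matrix.fromCols Bᴴ Yᴴ)
            (1 : Matrix (Fin M) (Fin M) ℂ)).PosSemidef ∧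
        (Matrix.trace S).re - (M : ℝ) ≤ 0 ∧
        (Matrix.fromBlocks
            (Matrix.fromBlocks U Y Yᴴ V)
            (Matrix.fromRows B W)
            (Matrix.fromCols Bᴴ Wᴴ)
            (1 : Matrix (Fin M) (Fin M) ℂ)).PosSemidef ∧
        (Matrix.trace U).re - (M : ℝ) ≤ 0 :=
  stmt_11_general N M B hbin hcol Xh W
end
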